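/- arXiv:1411.2849 — 3 statements merged into one kernel-verified Lean document; each statement's English description precedes it below -/
import Mathlib

section
/- If Ĉ^i_{jb} = 0, Ω^a_{ij} = 0, and L̂^a_{bk} = ∂_b N_k^a for all index values (the Levi–Civita constraints (lcconstr)), then Γ_{αβ,γ} = Γ̂^δ_{αβ} G_{δγ} for ALL α, β, γ ∈ {1,2,3,4}; that is, the N-adapted coefficients of the Levi–Civita connection coincide with those of the canonical d-connection, and the distortion tensor vanishes (Proposition A.5). -/
/- STATEMENT 6 (Proposition A.5): under the Levi–Civita constraints
Ĉ^i_{jb} = 0, Ω^a_{ij} = 0, L̂^a_{bk} = ∂_b N_k^a, the N-adapted coefficients of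
the Levi–Civita connection (nonholonomic Koszul formula) coincide with those of
the canonical d-connection: Γ_{αβ,γ} = Γ̂^δ_{αβ} G_{δγ} for all α,β,γ. -/

noncomputable section

abbrev Vec4 := (Fin 2 ⊕ Fin 2) → ℝ

/-- Partial derivative `∂_α f` on ℝ⁴. -/
def pd (α : Fin 2 ⊕ Fin 2) (f : Vec4 → ℝ) (u : Vec4) : ℝ :=
  fderiv ℝ f u (Pi.single α 1)

/-- N-elongated frame operator `e_i f = ∂_i f − N_i^a ∂_a f`. -/
def eH (N : Fin 2 → Fin 2 → Vec4 → ℝ) (i : Fin 2) (f : Vec4 → ℝ) (u : Vec4) : ℝ :=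
  pd (Sum.inl i) f u - ∑ a : Fin 2, N i a u * pd (Sum.inr a) f u

/-- `L̂^i_{jk}`. -/
def Lh (N ghinv gh : Fin 2 → Fin 2 → Vec4 → ℝ) (i j k : Fin 2) (u : Vec4) : ℝ :=
  (1/2) * ∑ r : Fin 2, ghinv i r u *
    (eH N k (gh j r) u + eH N j (gh k r) u - eH N r (gh j k) u)

/-- `Ĉ^i_{jc}`. -/
def Ch (ghinv gh : Fin 2 → Fin 2 → Vec4 → ℝ) (i j c : Fin 2) (u : Vec4) : ℝ :=
  (1/2) * ∑ k : Fin 2, ghinv i k u * pd (Sum.inr c) (gh j k) u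

/-- `Ĉ^a_{bc}`. -/
def Cv (gvinv gv : Fin 2 → Fin 2 → Vec4 → ℝ) (a b c : Fin 2) (u : Vec4) : ℝ :=
  (1/2) * ∑ d : Fin 2, gvinv a d u *
    (pd (Sum.inr c) (gv b d) u + pd (Sum.inr b) (gv c d) u - pd (Sum.inr d) (gv b c) u)

/-- `L̂^a_{bk}`. -/
def Lv (N gvinv gv : Fin 2 → Fin 2 → Vec4 → ℝ) (a b k : Fin 2) (u : Vec4) : ℝ :=
  pd (Sum.inr b) (N k a) u + (1/2) * ∑ c : Fin 2, gvinv a c u *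
    (eH N k (gv b c) u - (∑ d : Fin 2, gv d c u * pd (Sum.inr b) (N k d) u)
      - (∑ d : Fin 2, gv d b u * pd (Sum.inr c) (N k d) u))

/-- Canonical d-connection coefficients `Γ̂^γ_{αβ}`. -/
def Gam (N ghinv gh gvinv gv : Fin 2 → Fin 2 → Vec4 → ℝ) :
    (Fin 2 ⊕ Fin 2) → (Fin 2 ⊕ Fin 2) → (Fin 2 ⊕ Fin 2) → Vec4 → ℝ
  | Sum.inl i, Sum.inl j, Sum.inl k => Lh N ghinv gh i j k
  | Sum.inl i, Sum.inl j, Sum.inr c => Ch ghinv gh i j c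
  | Sum.inr a, Sum.inr b, Sum.inl k => Lv N gvinv gv a b k
  | Sum.inr a, Sum.inr b, Sum.inr c => Cv gvinv gv a b c
  | _, _, _ => fun _ => 0

/-- Anholonomy coefficients `W^γ_{αβ}`. -/
def Wco (N : Fin 2 → Fin 2 → Vec4 → ℝ) :
    (Fin 2 ⊕ Fin 2) → (Fin 2 ⊕ Fin 2) → (Fin 2 ⊕ Fin 2) → Vec4 → ℝ
  | Sum.inr a, Sum.inl i, Sum.inl j => fun u => eH N j (N i a) u - eH N i (N j a) u
  | Sum.inr b, Sum.inl i, Sum.inr a => fun u => pd (Sum.inr a) (N i b) u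
  | Sum.inr b, Sum.inr a, Sum.inl i => fun u => -(pd (Sum.inr a) (N i b) u)
  | _, _, _ => fun _ => 0

/-- The block-diagonal d-metric `G_{αβ}`. -/
def Gmat (gh gv : Fin 2 → Fin 2 → Vec4 → ℝ) :
    (Fin 2 ⊕ Fin 2) → (Fin 2 ⊕ Fin 2) → Vec4 → ℝ
  | Sum.inl i, Sum.inl j => gh i j
  | Sum.inr a, Sum.inr b => gv a b
  | _, _ => fun _ => 0

/-- The N-adapted frame operator `e_α`. -/
def eOp (N : Fin 2 → Fin 2 → Vec4 → ℝ) : (Fin 2 ⊕ Fin 2) → (Vec4 → ℝ) → Vec4 → ℝ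
  | Sum.inl i => eH N i
  | Sum.inr a => pd (Sum.inr a)

/-- Levi–Civita coefficients `Γ_{αβ,γ}` in the N-adapted frame (nonholonomic
Koszul formula): `2Γ_{αβ,γ} = e_β G_{αγ} + e_α G_{γβ} − e_γ G_{βα}
+ W^δ_{βα} G_{δγ} − W^δ_{αγ} G_{δβ} + W^δ_{γβ} G_{δα}`. -/
def Gamlow (N gh gv : Fin 2 → Fin 2 → Vec4 → ℝ) (α β γ : Fin 2 ⊕ Fin 2) (u : Vec4) : ℝ :=
  (1/2) * (eOp N β (Gmat gh gv α γ) u + eOp N α (Gmat gh gv γ β) u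
    - eOp N γ (Gmat gh gv β α) u
    + (∑ δ : Fin 2 ⊕ Fin 2, Wco N δ β α u * Gmat gh gv δ γ u)
    - (∑ δ : Fin 2 ⊕ Fin 2, Wco N δ α γ u * Gmat gh gv δ β u)
    + ∑ δ : Fin 2 ⊕ Fin 2, Wco N δ γ β u * Gmat gh gv δ α u)

lemma contract22 (g ginv : Fin 2 → Fin 2 → ℝ)
    (hsym : ∀ i j, g i j = g j i)
    (hinv : ∀ i j, g i 0 * ginv 0 j + g i 1 * ginv 1 j = if i = j then (1:ℝ) else 0)
    (A : Fin 2 → ℝ) (l : Fin 2) :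
    (ginv 0 0 * A 0 + ginv 0 1 * A 1) * g 0 l
      + (ginv 1 0 * A 0 + ginv 1 1 * A 1) * g 1 l = A l := by
  have h0 := hinv l 0
  have h1 := hinv l 1
  fin_cases l
  · norm_num at h0 h1
    simp only [Fin.zero_eta, Fin.mk_one]
    linear_combination A 0 * h0 + A 1 * h1 + (ginv 1 0 * A 0 + ginv 1 1 * A 1) * hsym 1 0
  · norm_num at h0 h1
    simp only [Fin.zero_eta, Fin.mk_one]
    linear_combination A 0 * h0 + A 1 * h1 + (ginv 0 0 * A 0 + ginv 0 1 * A 1) * hsym 0 1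

theorem levicivita_equals_canonical_under_constraints
    (N : Fin 2 → Fin 2 → Vec4 → ℝ) (hN : ∀ i a, ContDiff ℝ 1 (N i a))
    (gh ghinv gv gvinv : Fin 2 → Fin 2 → Vec4 → ℝ)
    (hgh : ∀ i j, ContDiff ℝ 1 (gh i j)) (hgv : ∀ a b, ContDiff ℝ 1 (gv a b))
    (hghsym : ∀ i j u, gh i j u = gh j i u) (hgvsym : ∀ a b u, gv a b u = gv b a u)
    (hghinv : ∀ i j u, ∑ r : Fin 2, gh i r u * ghinv r j u = if i = j then 1 else 0)
    (hghinv' : ∀ i j u, ∑ r : Fin 2, ghinv i r u * gh r j u = if i = j then 1 else 0)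
    (hgvinv : ∀ a b u, ∑ c : Fin 2, gv a c u * gvinv c b u = if a = b then 1 else 0)
    (hgvinv' : ∀ a b u, ∑ c : Fin 2, gvinv a c u * gv c b u = if a = b then 1 else 0)
    -- Levi–Civita constraints (lcconstr):
    (hC : ∀ i j b : Fin 2, ∀ u : Vec4, Ch ghinv gh i j b u = 0)
    (hΩ : ∀ a i j : Fin 2, ∀ u : Vec4, eH N j (N i a) u - eH N i (N j a) u = 0)
    (hL : ∀ a b k : Fin 2, ∀ u : Vec4, Lv N gvinv gv a b k u = pd (Sum.inr b) (N k a) u) :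
    ∀ α β γ : Fin 2 ⊕ Fin 2, ∀ u : Vec4,
      Gamlow N gh gv α β γ u
        = ∑ δ : Fin 2 ⊕ Fin 2, Gam N ghinv gh gvinv gv δ α β u * Gmat gh gv δ γ u := by
  -- function-level symmetry
  have hghf : ∀ i j, gh i j = gh j i := fun i j => funext fun u => hghsym i j u
  have hgvf : ∀ a b, gv a b = gv b a := fun a b => funext fun u => hgvsym a b u
  -- expanded inverse identities
  have hinvh : ∀ (i j : Fin 2) (u : Vec4),
      gh i 0 u * ghinv 0 j u + gh i 1 u * ghinv 1 j u = if i = j then (1:ℝ) else 0 := by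
    intro i j u; have := hghinv i j u; simpa [Fin.sum_univ_two] using this
  have hinvv : ∀ (a b : Fin 2) (u : Vec4),
      gv a 0 u * gvinv 0 b u + gv a 1 u * gvinv 1 b u = if a = b then (1:ℝ) else 0 := by
    intro a b u; have := hgvinv a b u; simpa [Fin.sum_univ_two] using this
  -- Lemma A: ∂_c gh = 0 under hC
  have hCinst : ∀ (i j c : Fin 2) (u : Vec4),
      ghinv i 0 u * pd (Sum.inr c) (gh j 0) u + ghinv i 1 u * pd (Sum.inr c) (gh j 1) u = 0 := by
    intro i j c u
    have h := hC i j c u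
    simp only [Ch, Fin.sum_univ_two] at h
    linarith
  have hA : ∀ (c j l : Fin 2) (u : Vec4), pd (Sum.inr c) (gh j l) u = 0 := by
    intro c j l u
    have h0 := hCinst 0 j c u
    have h1 := hCinst 1 j c u
    have g0 := hinvh l 0 u
    have g1 := hinvh l 1 u
    fin_cases l
    · norm_num at g0 g1
      simp only [Fin.zero_eta, Fin.mk_one]
      linear_combination gh 0 0 u * h0 + gh 0 1 u * h1
        - pd (Sum.inr c) (gh j 0) u * g0 - pd (Sum.inr c) (gh j 1) u * g1
    · norm_num at g0 g1
      simp only [Fin.zero_eta, Fin.mk_one]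
      linear_combination gh 1 0 u * h0 + gh 1 1 u * h1
        - pd (Sum.inr c) (gh j 0) u * g0 - pd (Sum.inr c) (gh j 1) u * g1
  -- Lemma B: e_k gv b c = Σ gv d c ∂_b N_k^d + Σ gv d b ∂_c N_k^d  under hL
  have hLinst : ∀ (a b k : Fin 2) (u : Vec4),
      gvinv a 0 u * (eH N k (gv b 0) u
          - (gv 0 0 u * pd (Sum.inr b) (N k 0) u + gv 1 0 u * pd (Sum.inr b) (N k 1) u)
          - (gv 0 b u * pd (Sum.inr 0) (N k 0) u + gv 1 b u * pd (Sum.inr 0) (N k 1) u))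
      + gvinv a 1 u * (eH N k (gv b 1) u
          - (gv 0 1 u * pd (Sum.inr b) (N k 0) u + gv 1 1 u * pd (Sum.inr b) (N k 1) u)
          - (gv 0 b u * pd (Sum.inr 1) (N k 0) u + gv 1 b u * pd (Sum.inr 1) (N k 1) u)) = 0 := by
    intro a b k u
    have h := hL a b k u
    simp only [Lv, Fin.sum_univ_two] at h
    linarith
  have hB : ∀ (k b c : Fin 2) (u : Vec4), eH N k (gv b c) u
      = (gv 0 c u * pd (Sum.inr b) (N k 0) u + gv 1 c u * pd (Sum.inr b) (N k 1) u)
      + (gv 0 b u * pd (Sum.inr c) (N k 0) u + gv 1 b u * pd (Sum.inr c) (N k 1) u) := by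
    intro k b c u
    have h0 := hLinst 0 b k u
    have h1 := hLinst 1 b k u
    have g0 := hinvv c 0 u
    have g1 := hinvv c 1 u
    fin_cases c
    · norm_num at g0 g1
      simp only [Fin.zero_eta, Fin.mk_one]
      linear_combination gv 0 0 u * h0 + gv 0 1 u * h1
        - (eH N k (gv b 0) u
          - (gv 0 0 u * pd (Sum.inr b) (N k 0) u + gv 1 0 u * pd (Sum.inr b) (N k 1) u)
          - (gv 0 b u * pd (Sum.inr 0) (N k 0) u + gv 1 b u * pd (Sum.inr 0) (N k 1) u)) * g0
        - (eH N k (gv b 1) u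
          - (gv 0 1 u * pd (Sum.inr b) (N k 0) u + gv 1 1 u * pd (Sum.inr b) (N k 1) u)
          - (gv 0 b u * pd (Sum.inr 1) (N k 0) u + gv 1 b u * pd (Sum.inr 1) (N k 1) u)) * g1
    · norm_num at g0 g1
      simp only [Fin.zero_eta, Fin.mk_one]
      linear_combination gv 1 0 u * h0 + gv 1 1 u * h1
        - (eH N k (gv b 0) u
          - (gv 0 0 u * pd (Sum.inr b) (N k 0) u + gv 1 0 u * pd (Sum.inr b) (N k 1) u)
          - (gv 0 b u * pd (Sum.inr 0) (N k 0) u + gv 1 b u * pd (Sum.inr 0) (N k 1) u)) * g0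
        - (eH N k (gv b 1) u
          - (gv 0 1 u * pd (Sum.inr b) (N k 0) u + gv 1 1 u * pd (Sum.inr b) (N k 1) u)
          - (gv 0 b u * pd (Sum.inr 1) (N k 0) u + gv 1 b u * pd (Sum.inr 1) (N k 1) u)) * g1
  have hpd0 : ∀ (α : Fin 2 ⊕ Fin 2) (u : Vec4), pd α (fun _ => (0:ℝ)) u = 0 := by
    intro α u; simp [pd]
  have heH0 : ∀ (i : Fin 2) (u : Vec4), eH N i (fun _ => (0:ℝ)) u = 0 := by
    intro i u; simp [eH, Fin.sum_univ_two, hpd0]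
  intro α β γ u
  rcases α with j | b <;> rcases β with k | c <;> rcases γ with l | d
  -- (h,h,h)
  · simp only [hpd0, heH0, Gamlow, Gam, Gmat, Wco, eOp, Lh, Fintype.sum_sum_type, Fin.sum_univ_two]
    rw [hghf l k, hghf k j]
    linear_combination (-1/2 : ℝ) * contract22 (fun i j' => gh i j' u) (fun i j' => ghinv i j' u)
      (fun i j' => hghsym i j' u) (fun i j' => hinvh i j' u)
      (fun r => eH N k (gh j r) u + eH N j (gh k r) u - eH N r (gh j k) u) l
  -- (h,h,v)
  · simp only [hpd0, heH0, Gamlow, Gam, Gmat, Wco, eOp, Fintype.sum_sum_type, Fin.sum_univ_two, hA, hΩ]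
    ring
  -- (h,v,h)
  · simp only [hpd0, heH0, Gamlow, Gam, Gmat, Wco, eOp, Fintype.sum_sum_type, Fin.sum_univ_two, hA, hΩ, hC]
    ring
  -- (h,v,v)
  · simp only [hpd0, heH0, Gamlow, Gam, Gmat, Wco, eOp, Fintype.sum_sum_type, Fin.sum_univ_two, hA, hΩ, hC]
    rw [hgvf d c]
    linear_combination (1/2 : ℝ) * hB j c d u
  -- (v,h,h)
  · simp only [hpd0, heH0, Gamlow, Gam, Gmat, Wco, eOp, Fintype.sum_sum_type, Fin.sum_univ_two, hA, hΩ]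
    ring
  -- (v,h,v)
  · simp only [hpd0, heH0, Gamlow, Gam, Gmat, Wco, eOp, Fintype.sum_sum_type, Fin.sum_univ_two, hL]
    linear_combination (1/2 : ℝ) * hB k b d u
  -- (v,v,h)
  · simp only [hpd0, heH0, Gamlow, Gam, Gmat, Wco, eOp, Fintype.sum_sum_type, Fin.sum_univ_two, hA, hΩ]
    rw [hgvf c b]
    linear_combination (-1/2 : ℝ) * hB l b c u
  -- (v,v,v)
  · simp only [hpd0, heH0, Gamlow, Gam, Gmat, Wco, eOp, Cv, Fintype.sum_sum_type, Fin.sum_univ_two]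
    rw [hgvf d c, hgvf c b]
    linear_combination (-1/2 : ℝ) * contract22 (fun a b' => gv a b' u) (fun a b' => gvinv a b' u)
      (fun a b' => hgvsym a b' u) (fun a b' => hinvv a b' u)
      (fun r => pd (Sum.inr c) (gv b r) u + pd (Sum.inr b) (gv c r) u - pd (Sum.inr r) (gv b c) u) d
end
end

section
/- Let K be twice differentiable and Θ differentiable at a point t, with values defined in a neighborhood of t, and let Υ be a real-valued function. Assume Θ(t) ≠ 0, K(t) ≠ 0, K′(t) ≠ 0, and that the generating relation Θ(t) Θ′(t) = 4 Υ(t) K(t) K′(t) holds at t. Define h₄ := −K² and h₃ := 4 (K′)²/Θ². Then at the point t: h₄″ − (h₄′)²/(2 h₄) − (h₃′ h₄′)/(2 h₃) = 2 h₃ h₄ Υ. (Verification that the generating-function formulas (sol1b)–(sol1c) of Theorem 3.1 solve the vertical equation (eq2b) of the gravitational field equations.) -/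
/-! With h₄ = -K² one has h₄″ - (h₄′)²/(2h₄) = -2KK″, and the logarithmic
derivative of h₃ = 4(K′)²/Θ² is h₃′/h₃ = 2(K″/K′ - Θ′/Θ). Hence the left-hand
side collapses to -2KK′Θ′/Θ, and the generating relation Θ′ = 4ΥKK′/Θ turns
this into -8ΥK²(K′)²/Θ² = 2h₃h₄Υ. -/

open Filter Topology

theorem deriv_neg_sq_eventuallyEq {K : ℝ → ℝ} {t : ℝ}
    (hK : ∀ᶠ s in 𝓝 t, DifferentiableAt ℝ K s) :
    deriv (fun s => -K s ^ 2) =ᶠ[𝓝 t] fun s => -(2 * K s * deriv K s) := by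
  filter_upwards [hK] with s hs
  exact ((hs.hasDerivAt.fun_pow 2).fun_neg.congr_deriv (by ring)).deriv

theorem hasDerivAt_deriv_neg_sq {K : ℝ → ℝ} {t : ℝ}
    (hK : ∀ᶠ s in 𝓝 t, DifferentiableAt ℝ K s) (hK2 : DifferentiableAt ℝ (deriv K) t) :
    HasDerivAt (deriv fun s => -K s ^ 2)
      (-(2 * (deriv K t ^ 2 + K t * deriv (deriv K) t))) t := by
  refine HasDerivAt.congr_of_eventuallyEq ?_ (deriv_neg_sq_eventuallyEq hK)
  convert ((hK.self_of_nhds.hasDerivAt.fun_mul hK2.hasDerivAt).const_mul 2).fun_neg using 1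
  · ext s; ring
  · ring

theorem HasDerivAt.const_mul_sq_div_sq {f g : ℝ → ℝ} {f' g' t : ℝ} (c : ℝ)
    (hf : HasDerivAt f f' t) (hg : HasDerivAt g g' t) (hg0 : g t ≠ 0) :
    HasDerivAt (fun s => c * f s ^ 2 / g s ^ 2)
      (2 * c * f t * (f' * g t - f t * g') / g t ^ 3) t := by
  refine (((hf.fun_pow 2).const_mul c).fun_div (hg.fun_pow 2) (pow_ne_zero 2 hg0)).congr_deriv ?_
  field_simp
  ring

theorem vertical_equation_of_generating_relation {k k' k'' θ θ' υ : ℝ}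
    (hθ : θ ≠ 0) (hk : k ≠ 0) (hk' : k' ≠ 0) (hgen : θ * θ' = 4 * υ * k * k') :
    -(2 * (k' ^ 2 + k * k'')) - (-(2 * k * k')) ^ 2 / (2 * -k ^ 2)
        - 2 * 4 * k' * (k'' * θ - k' * θ') / θ ^ 3 * -(2 * k * k') / (2 * (4 * k' ^ 2 / θ ^ 2))
      = 2 * (4 * k' ^ 2 / θ ^ 2) * -k ^ 2 * υ := by
  have hθ' : θ' = 4 * υ * k * k' / θ := by
    rw [eq_div_iff hθ, ← hgen]; ring
  subst hθ'
  field_simp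
  ring

theorem generating_functions_solve_vertical_equation
    (Θ K Υ : ℝ → ℝ) (t : ℝ)
    (hK : ∀ᶠ s in nhds t, DifferentiableAt ℝ K s)
    (hK2 : DifferentiableAt ℝ (deriv K) t)
    (hΘ : DifferentiableAt ℝ Θ t)
    (hΘ0 : Θ t ≠ 0) (hK0 : K t ≠ 0) (hK'0 : deriv K t ≠ 0)
    (hgen : Θ t * deriv Θ t = 4 * Υ t * K t * deriv K t)
    (h₃ h₄ : ℝ → ℝ)
    (hh₄ : h₄ = fun s => -(K s) ^ 2)
    (hh₃ : h₃ = fun s => 4 * (deriv K s) ^ 2 / (Θ s) ^ 2) :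
    deriv (deriv h₄) t - (deriv h₄ t) ^ 2 / (2 * h₄ t)
        - deriv h₃ t * deriv h₄ t / (2 * h₃ t)
      = 2 * h₃ t * h₄ t * Υ t := by
  subst hh₃ hh₄
  rw [(hasDerivAt_deriv_neg_sq hK hK2).deriv, (deriv_neg_sq_eventuallyEq hK).self_of_nhds,
    (hK2.hasDerivAt.const_mul_sq_div_sq 4 hΘ.hasDerivAt hΘ0).deriv]
  exact vertical_equation_of_generating_relation hΘ0 hK0 hK'0 hgen
end

section
/- Let ϖ be a real differentiable function of one variable with ϖ and ϖ′ nowhere zero on an interval, and let h₀ ≠ 0 be a real constant. Define h₄ := −ϖ² and h₃ := h₀² (ϖ′)². Then on that interval: (i) |h₄′| / √(|h₃ h₄|) = 2/|h₀| is constant, so the generating function φ = ln(|h₄′|/√(|h₃h₄|)) is constant and φ′ = 0; and (ii) h₄′ = −2ϖϖ′ is nowhere zero. Hence the pair (h₃, h₄) solves the effective vacuum equation φ* h₄* = 0 (equation (ep2a)) with h₄* ≠ 0, i.e. it realizes the second class of off-diagonal effective vacuum EYMH solutions of Corollary 3.2, equivalently √|h₃| = ±h₀ (√|h₄|)′ (relation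 (rel1)). -/
/- The ansatz makes h₃h₄ = −(h₀ϖ′ϖ)², so √|h₃h₄| = |h₀||ϖ′||ϖ| while |h₄′| = 2|ϖ||ϖ′|: the factors
|ϖ||ϖ′| cancel and the ratio inside the logarithm is the constant 2/|h₀| on the interval. A function
that is constant on an open set has vanishing derivative there, so φ′ = 0 and (ep2a) holds, while
h₄′ = −2ϖϖ′ is nonzero because ϖ and ϖ′ are. -/

open Set

theorem deriv_neg_sq {f : ℝ → ℝ} {t : ℝ} (hf : DifferentiableAt ℝ f t) :
    deriv (fun s => -f s ^ 2) t = -2 * f t * deriv f t := by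
  rw [deriv.fun_neg, deriv_fun_pow hf 2]
  ring

theorem abs_neg_two_mul_div_sqrt_abs (x y c : ℝ) (hxy : x * y ≠ 0) :
    |-2 * x * y| / √|c ^ 2 * y ^ 2 * -x ^ 2| = 2 / |c| := by
  have hsqrt : √|c ^ 2 * y ^ 2 * -x ^ 2| = |c| * |x * y| := by
    rw [show c ^ 2 * y ^ 2 * -x ^ 2 = -(c * (x * y)) ^ 2 by ring, abs_neg, abs_pow, sq_abs,
      Real.sqrt_sq_eq_abs, abs_mul]
  rw [hsqrt, show -2 * x * y = -2 * (x * y) by ring, abs_mul, abs_neg, abs_two,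
    mul_div_mul_right _ _ (abs_ne_zero.mpr hxy)]

theorem deriv_eq_zero_of_eqOn_const {𝕜 F : Type*} [NontriviallyNormedField 𝕜]
    [NormedAddCommGroup F] [NormedSpace 𝕜 F] {f : 𝕜 → F} {s : Set 𝕜} {c : F} {t : 𝕜}
    (hs : IsOpen s) (hf : EqOn f (fun _ => c) s) (ht : t ∈ s) : deriv f t = 0 := by
  rw [(hf.eventuallyEq_of_mem (hs.mem_nhds ht)).deriv_eq, deriv_const]

theorem effective_vacuum_second_class_general
    (a b h₀ : ℝ) (ϖ : ℝ → ℝ)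
    (hϖd : ∀ t ∈ Set.Ioo a b, DifferentiableAt ℝ ϖ t)
    (hϖ0 : ∀ t ∈ Set.Ioo a b, ϖ t ≠ 0)
    (hϖ'0 : ∀ t ∈ Set.Ioo a b, deriv ϖ t ≠ 0)
    (h₃ h₄ : ℝ → ℝ)
    (hh₄ : h₄ = fun t => -(ϖ t) ^ 2)
    (hh₃ : h₃ = fun t => h₀ ^ 2 * (deriv ϖ t) ^ 2)
    (φ : ℝ → ℝ)
    (hφ : φ = fun t => Real.log (|deriv h₄ t| / Real.sqrt |h₃ t * h₄ t|)) :
    ∀ t ∈ Set.Ioo a b,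
      -- (i) the ratio |h₄′|/√|h₃h₄| is the constant 2/|h₀|, so φ is constant
      |deriv h₄ t| / Real.sqrt |h₃ t * h₄ t| = 2 / |h₀| ∧
      deriv φ t = 0 ∧
      -- (ii) h₄′ = −2ϖϖ′ is nowhere zero
      deriv h₄ t = -2 * ϖ t * deriv ϖ t ∧ deriv h₄ t ≠ 0 ∧
      -- hence (h₃, h₄) solves the effective vacuum equation φ* h₄* = 0 with h₄* ≠ 0
      deriv φ t * deriv h₄ t = 0 := by
  have hprod : ∀ t ∈ Ioo a b, ϖ t * deriv ϖ t ≠ 0 := fun t ht => mul_ne_zero (hϖ0 t ht) (hϖ'0 t ht)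
  have hd₄ : ∀ t ∈ Ioo a b, deriv h₄ t = -2 * ϖ t * deriv ϖ t := fun t ht => by
    rw [hh₄]; exact deriv_neg_sq (hϖd t ht)
  have hratio : ∀ t ∈ Ioo a b, |deriv h₄ t| / √|h₃ t * h₄ t| = 2 / |h₀| := fun t ht => by
    rw [hd₄ t ht, hh₃, hh₄]
    exact abs_neg_two_mul_div_sqrt_abs _ _ _ (hprod t ht)
  have hφ' : ∀ t ∈ Ioo a b, deriv φ t = 0 := fun t ht =>
    deriv_eq_zero_of_eqOn_const (c := Real.log (2 / |h₀|)) isOpen_Ioo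
      (fun s hs => by simp only [hφ, hratio s hs]) ht
  intro t ht
  have hne : deriv h₄ t ≠ 0 := by
    rw [hd₄ t ht, mul_assoc]
    exact mul_ne_zero (by norm_num) (hprod t ht)
  exact ⟨hratio t ht, hφ' t ht, hd₄ t ht, hne, by rw [hφ' t ht, zero_mul]⟩

theorem effective_vacuum_second_class
    (a b h₀ : ℝ) (hh₀ : h₀ ≠ 0) (ϖ : ℝ → ℝ)
    (hϖd : ∀ t ∈ Set.Ioo a b, DifferentiableAt ℝ ϖ t)
    (hϖ0 : ∀ t ∈ Set.Ioo a b, ϖ t ≠ 0)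
    (hϖ'0 : ∀ t ∈ Set.Ioo a b, deriv ϖ t ≠ 0)
    (h₃ h₄ : ℝ → ℝ)
    (hh₄ : h₄ = fun t => -(ϖ t) ^ 2)
    (hh₃ : h₃ = fun t => h₀ ^ 2 * (deriv ϖ t) ^ 2)
    (φ : ℝ → ℝ)
    (hφ : φ = fun t => Real.log (|deriv h₄ t| / Real.sqrt |h₃ t * h₄ t|)) :
    ∀ t ∈ Set.Ioo a b,
      -- (i) the ratio |h₄′|/√|h₃h₄| is the constant 2/|h₀|, so φ is constant
      |deriv h₄ t| / Real.sqrt |h₃ t * h₄ t| = 2 / |h₀| ∧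
      deriv φ t = 0 ∧
      -- (ii) h₄′ = −2ϖϖ′ is nowhere zero
      deriv h₄ t = -2 * ϖ t * deriv ϖ t ∧ deriv h₄ t ≠ 0 ∧
      -- hence (h₃, h₄) solves the effective vacuum equation φ* h₄* = 0 with h₄* ≠ 0
      deriv φ t * deriv h₄ t = 0 :=
  effective_vacuum_second_class_general a b h₀ ϖ hϖd hϖ0 hϖ'0 h₃ h₄ hh₄ hh₃ φ hφ
end
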